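/- arXiv:2103.07421 — 3 statements merged into one kernel-verified Lean document; each statement's English description precedes it below -/
import Mathlib

section
/- If φ satisfies dφ/ds = φ(1-φ^{-n})^{1/2} with n = 4, then for all s > 0, 2·(d/ds)((dφ/ds)^{-1})·(d²φ/ds²) + 2·(dφ/ds)²·(d/ds)((φ·dφ/ds)^{-1}) = -(1-φ^{-4})^{-1}(6 + 2φ^{-8}), which is negative whenever φ > 1. -/
/-!
On `s > 0` the equation reads `φ' = f ∘ φ` with `f y = y √(1 - y⁻⁴)`, so every derivative in the
expression is a function of `x = φ s` alone: `φ'' = f'(x) f(x)`, `(1/φ')' = -f'(x)/f(x)` and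
`(1/(φ φ'))' = -(f(x) + x f'(x))/(x² f(x))`. The expression thus collapses to
`-2 (f'² + f f'/x + f²/x²)`. With `t = x⁻⁴` one has `f²/x² = 1 - t`, `f f'/x = 1 + t` and
`f'² = (1 + t)²/(1 - t)`, and `(1 + t)² + (1 - t²) + (1 - t)² = 3 + t²`.
-/

open Filter Topology

section Autonomous

variable {φ f : ℝ → ℝ} {f' s : ℝ}

theorem deriv_eventuallyEq_of_autonomous (hode : ∀ᶠ τ in 𝓝 s, HasDerivAt φ (f (φ τ)) τ) :
    deriv φ =ᶠ[𝓝 s] fun τ => f (φ τ) :=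
  hode.mono fun _ h => h.deriv

theorem hasDerivAt_deriv_of_autonomous (hode : ∀ᶠ τ in 𝓝 s, HasDerivAt φ (f (φ τ)) τ)
    (hf : HasDerivAt f f' (φ s)) : HasDerivAt (deriv φ) (f' * f (φ s)) s :=
  (hf.comp s hode.self_of_nhds).congr_of_eventuallyEq (deriv_eventuallyEq_of_autonomous hode)

theorem hasDerivAt_inv_deriv_of_autonomous (hode : ∀ᶠ τ in 𝓝 s, HasDerivAt φ (f (φ τ)) τ)
    (hf : HasDerivAt f f' (φ s)) (hf0 : f (φ s) ≠ 0) :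
    HasDerivAt (fun τ => (deriv φ τ)⁻¹) (-f' / f (φ s)) s := by
  have h := (hasDerivAt_deriv_of_autonomous hode hf).inv (by rwa [hode.self_of_nhds.deriv])
  rw [hode.self_of_nhds.deriv] at h
  exact h.congr_deriv (by field_simp)

theorem hasDerivAt_inv_mul_deriv_of_autonomous (hode : ∀ᶠ τ in 𝓝 s, HasDerivAt φ (f (φ τ)) τ)
    (hf : HasDerivAt f f' (φ s)) (hφ0 : φ s ≠ 0) (hf0 : f (φ s) ≠ 0) :
    HasDerivAt (fun τ => (φ τ * deriv φ τ)⁻¹)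
      (-(f (φ s) + φ s * f') / (φ s ^ 2 * f (φ s))) s := by
  have h := (hode.self_of_nhds.mul (hasDerivAt_deriv_of_autonomous hode hf)).inv
    (by simp only [Pi.mul_apply, hode.self_of_nhds.deriv]; exact mul_ne_zero hφ0 hf0)
  simp only [Pi.mul_apply, hode.self_of_nhds.deriv] at h
  exact h.congr_deriv (by field_simp)

theorem deriv_combination_of_autonomous (hode : ∀ᶠ τ in 𝓝 s, HasDerivAt φ (f (φ τ)) τ)
    (hf : HasDerivAt f f' (φ s)) (hφ0 : φ s ≠ 0) (hf0 : f (φ s) ≠ 0) :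
    2 * deriv (fun τ => (deriv φ τ)⁻¹) s * deriv (deriv φ) s
        + 2 * deriv φ s ^ 2 * deriv (fun τ => (φ τ * deriv φ τ)⁻¹) s
      = -2 * (f' ^ 2 + f (φ s) * f' / φ s + (f (φ s) / φ s) ^ 2) := by
  rw [(hasDerivAt_inv_deriv_of_autonomous hode hf hf0).deriv,
    (hasDerivAt_deriv_of_autonomous hode hf).deriv, hode.self_of_nhds.deriv,
    (hasDerivAt_inv_mul_deriv_of_autonomous hode hf hφ0 hf0).deriv]
  field_simp
  ring

end Autonomous

theorem hasDerivAt_mul_sqrt_one_sub_zpow_neg_four {x : ℝ} (hx : x ≠ 0)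
    (hu : 0 < 1 - x ^ (-4 : ℤ)) :
    HasDerivAt (fun y => y * √(1 - y ^ (-4 : ℤ)))
      ((1 + x ^ (-4 : ℤ)) / √(1 - x ^ (-4 : ℤ))) x := by
  have hsqrt := (Real.hasDerivAt_sqrt hu.ne').comp x
    ((hasDerivAt_zpow (-4) x (Or.inl hx)).const_sub 1)
  refine ((hasDerivAt_id x).mul hsqrt).congr_deriv ?_
  have h5 : x ^ (-4 - 1 : ℤ) = x ^ (-4 : ℤ) / x := by
    rw [zpow_sub_one₀ hx, div_eq_mul_inv]
  simp only [Function.comp_apply, id, h5]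
  push_cast
  generalize x ^ (-4 : ℤ) = t at hu ⊢
  have hr : 0 < √(1 - t) := Real.sqrt_pos.mpr hu
  field_simp
  rw [Real.sq_sqrt hu.le]
  ring

theorem deriv_combination_of_hasDerivAt_mul_sqrt {φ : ℝ → ℝ} {s : ℝ}
    (hode : ∀ᶠ τ in 𝓝 s, HasDerivAt φ (φ τ * √(1 - φ τ ^ (-4 : ℤ))) τ)
    (hφ0 : φ s ≠ 0) (hu : 0 < 1 - φ s ^ (-4 : ℤ)) :
    2 * deriv (fun τ => (deriv φ τ)⁻¹) s * deriv (deriv φ) s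
        + 2 * deriv φ s ^ 2 * deriv (fun τ => (φ τ * deriv φ τ)⁻¹) s
      = -(1 - φ s ^ (-4 : ℤ))⁻¹ * (6 + 2 * φ s ^ (-8 : ℤ)) := by
  have hr : 0 < √(1 - φ s ^ (-4 : ℤ)) := Real.sqrt_pos.mpr hu
  rw [deriv_combination_of_autonomous (f := fun y => y * √(1 - y ^ (-4 : ℤ))) hode
    (hasDerivAt_mul_sqrt_one_sub_zpow_neg_four hφ0 hu) hφ0 (mul_ne_zero hφ0 hr.ne')]
  have h8 : φ s ^ (-8 : ℤ) = (φ s ^ (-4 : ℤ)) ^ 2 := by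
    rw [← zpow_natCast, ← zpow_mul]; norm_num
  have hr2 := Real.sq_sqrt hu.le
  rw [h8]
  generalize √(1 - φ s ^ (-4 : ℤ)) = r at hr hr2 ⊢
  generalize φ s ^ (-4 : ℤ) = t at hu hr2 ⊢
  have h1 : ((1 + t) / r) ^ 2 = (1 + t) ^ 2 / (1 - t) := by rw [div_pow, hr2]
  have h2 : φ s * r * ((1 + t) / r) / φ s = 1 + t := by field_simp
  have h3 : (φ s * r / φ s) ^ 2 = 1 - t := by rw [mul_div_cancel_left₀ r hφ0, hr2]
  rw [h1, h2, h3]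
  field_simp
  ring

/-- If `φ` satisfies `dφ/ds = φ(1-φ^{-4})^{1/2}` (the `n = 4` case) with `φ > 1`, then
for all `s > 0`,
`2 (d/ds)((dφ/ds)⁻¹) (d²φ/ds²) + 2 (dφ/ds)² (d/ds)((φ dφ/ds)⁻¹)
  = -(1-φ^{-4})⁻¹ (6 + 2 φ^{-8})`,
which is negative whenever `φ > 1`. -/
theorem stmt1 (φ : ℝ → ℝ)
    (hφ : ∀ s > (0 : ℝ), 1 < φ s)
    (hode : ∀ s > (0 : ℝ),
      HasDerivAt φ (φ s * Real.sqrt (1 - (φ s) ^ (-4 : ℤ))) s) :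
    ∀ s > (0 : ℝ),
      (2 * deriv (fun τ => (deriv φ τ)⁻¹) s * deriv (deriv φ) s
          + 2 * (deriv φ s) ^ 2 * deriv (fun τ => (φ τ * deriv φ τ)⁻¹) s
        = -(1 - (φ s) ^ (-4 : ℤ))⁻¹ * (6 + 2 * (φ s) ^ (-8 : ℤ))) ∧
      (2 * deriv (fun τ => (deriv φ τ)⁻¹) s * deriv (deriv φ) s
          + 2 * (deriv φ s) ^ 2 * deriv (fun τ => (φ τ * deriv φ τ)⁻¹) s < 0) := by
  intro s hs
  have hu : 0 < 1 - φ s ^ (-4 : ℤ) := sub_pos.2 (zpow_lt_one_of_neg₀ (hφ s hs) (by norm_num))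
  have key := deriv_combination_of_hasDerivAt_mul_sqrt (eventually_of_mem (Ioi_mem_nhds hs) hode)
    (zero_lt_one.trans (hφ s hs)).ne' hu
  refine ⟨key, key ▸ ?_⟩
  rw [neg_mul, neg_lt_zero]
  positivity
end

section
/- Suppose w : [C+1,∞) → ℝ is differentiable and satisfies w'(t) ≤ -2(t+C)^{-1} w(t) + C(t-C)^{-3} for some constant C > 0. Then there exists a constant C' such that w(t) ≤ C'(t-C)^{-2} log t for all sufficiently large t. -/
/-!
Multiplying by the integrating factor `(t + C) ^ 2` turns the inequality into
`((t + C) ^ 2 w)' ≤ C (t + C) ^ 2 (t - C) ^ (-3)`, and for `t ≥ C + 1` we have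
`t + C ≤ (2C + 1)(t - C)`, so the right side is at most `C (2C + 1) ^ 2 / (t - C)`.
Comparing with `C (2C + 1) ^ 2 log (t - C)` gives
`(t + C) ^ 2 w(t) ≤ (2C + 1) ^ 2 w(C + 1) + C (2C + 1) ^ 2 log (t - C)`,
and dividing by `(t + C) ^ 2 ≥ (t - C) ^ 2` gives the bound once `log t ≥ 1`.
-/

open Real Set

theorem sub_le_sub_of_hasDerivAt_le {f f' g g' : ℝ → ℝ} {a : ℝ}
    (hf : ∀ x ≥ a, HasDerivAt f (f' x) x) (hg : ∀ x ≥ a, HasDerivAt g (g' x) x)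
    (hle : ∀ x ≥ a, f' x ≤ g' x) {x : ℝ} (hx : a ≤ x) :
    f x - f a ≤ g x - g a := by
  have hd : ∀ y ≥ a, HasDerivAt (fun y => g y - f y) (g' y - f' y) y :=
    fun y hy => (hg y hy).sub (hf y hy)
  have hmono : MonotoneOn (fun y => g y - f y) (Ici a) := by
    refine monotoneOn_of_deriv_nonneg (convex_Ici a)
      (fun y hy => (hd y hy).continuousAt.continuousWithinAt)
      (fun y hy => (hd y (interior_subset hy)).differentiableAt.differentiableWithinAt)
      (fun y hy => ?_)
    rw [(hd y (interior_subset hy)).deriv]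
    exact sub_nonneg.2 (hle y (interior_subset hy))
  linarith [hmono self_mem_Ici hx hx]

theorem hasDerivAt_add_sq_mul {w : ℝ → ℝ} {C t : ℝ} (hw : DifferentiableAt ℝ w t) :
    HasDerivAt (fun s => (s + C) ^ 2 * w s)
      (2 * (t + C) * w t + (t + C) ^ 2 * deriv w t) t := by
  have hsq : HasDerivAt (fun s => (s + C) ^ 2) (2 * (t + C)) t := by
    simpa using ((hasDerivAt_id t).add_const C).fun_pow 2
  exact hsq.fun_mul hw.hasDerivAt

theorem add_sq_mul_deriv_le {C t w w' g : ℝ} (ht : 0 < t + C)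
    (hineq : w' ≤ -2 * (t + C)⁻¹ * w + g) :
    2 * (t + C) * w + (t + C) ^ 2 * w' ≤ (t + C) ^ 2 * g := by
  have h := mul_le_mul_of_nonneg_left hineq (sq_nonneg (t + C))
  have e : (t + C) ^ 2 * (-2 * (t + C)⁻¹ * w + g) = -(2 * (t + C) * w) + (t + C) ^ 2 * g := by
    field_simp
  linarith

theorem add_sq_mul_zpow_neg_three_le {C t : ℝ} (hC : 0 ≤ C) (ht : C + 1 ≤ t) :
    (t + C) ^ 2 * (C * (t - C) ^ (-3 : ℤ)) ≤ C * (2 * C + 1) ^ 2 * (t - C)⁻¹ := by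
  have hpos : 0 < t - C := by linarith
  have hsq : (t + C) ^ 2 ≤ (2 * C + 1) ^ 2 * (t - C) ^ 2 := by
    rw [← mul_pow]
    exact pow_le_pow_left₀ (by linarith) (by nlinarith) 2
  calc (t + C) ^ 2 * (C * (t - C) ^ (-3 : ℤ))
      ≤ (2 * C + 1) ^ 2 * (t - C) ^ 2 * (C * (t - C) ^ (-3 : ℤ)) := by gcongr
    _ = C * (2 * C + 1) ^ 2 * (t - C)⁻¹ := by
      rw [show (-3 : ℤ) = -1 + -2 by norm_num, zpow_add₀ hpos.ne', zpow_neg_one]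
      field_simp

theorem hasDerivAt_mul_log_sub {K C t : ℝ} (ht : C < t) :
    HasDerivAt (fun s => K * log (s - C)) (K * (t - C)⁻¹) t := by
  simpa using (((hasDerivAt_id t).sub_const C).log (sub_pos.2 ht).ne').const_mul K

theorem add_sq_mul_le_log_of_deriv_le {C : ℝ} (hC : 0 ≤ C) {w : ℝ → ℝ}
    (hdiff : ∀ t ≥ C + 1, DifferentiableAt ℝ w t)
    (hineq : ∀ t ≥ C + 1, deriv w t ≤ -2 * (t + C)⁻¹ * w t + C * (t - C) ^ (-3 : ℤ))
    {t : ℝ} (ht : C + 1 ≤ t) :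
    (t + C) ^ 2 * w t ≤ (2 * C + 1) ^ 2 * w (C + 1) + C * (2 * C + 1) ^ 2 * log (t - C) := by
  have key := sub_le_sub_of_hasDerivAt_le (fun s hs => hasDerivAt_add_sq_mul (hdiff s hs))
    (fun s hs => hasDerivAt_mul_log_sub (K := C * (2 * C + 1) ^ 2) (by linarith))
    (fun s hs => (add_sq_mul_deriv_le (by linarith) (hineq s hs)).trans
      (add_sq_mul_zpow_neg_three_le hC hs)) ht
  have e : C + 1 + C = 2 * C + 1 := by ring
  simp only [add_sub_cancel_left, log_one, mul_zero, sub_zero, e] at key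
  linarith

theorem le_mul_zpow_neg_two_mul_log {C K A t y : ℝ} (hC : 0 ≤ C) (hK : 0 ≤ K)
    (htC : C + 1 ≤ t) (hte : exp 1 ≤ t) (hy : (t + C) ^ 2 * y ≤ K * log (t - C) + A) :
    y ≤ (K + |A|) * (t - C) ^ (-2 : ℤ) * log t := by
  have hpos : 0 < t - C := by linarith
  have hlog_one : 1 ≤ log t := (le_log_iff_exp_le (by linarith [exp_pos 1])).2 hte
  have hlog_sub : log (t - C) ≤ log t := log_le_log hpos (by linarith)
  have hbound : (t + C) ^ 2 * y ≤ (K + |A|) * log t := by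
    nlinarith [le_abs_self A, abs_nonneg A, mul_le_mul_of_nonneg_left hlog_sub hK]
  have hsq : (t - C) ^ 2 ≤ (t + C) ^ 2 := by nlinarith
  calc y ≤ (K + |A|) * log t / (t + C) ^ 2 := by
        rw [le_div_iff₀ (pow_pos (by linarith) 2)]
        linarith
    _ ≤ (K + |A|) * log t / (t - C) ^ 2 :=
        div_le_div_of_nonneg_left (by positivity) (pow_pos hpos 2) hsq
    _ = (K + |A|) * (t - C) ^ (-2 : ℤ) * log t := by
        rw [zpow_neg, zpow_ofNat]
        ring

/-- If `w` is differentiable on `[C+1, ∞)` with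
`w'(t) ≤ -2 (t+C)⁻¹ w(t) + C (t-C)^{-3}` for some `C > 0`, then there exists a constant
`C'` with `w(t) ≤ C' (t-C)^{-2} log t` for all sufficiently large `t`. -/
theorem stmt5 (C : ℝ) (hC : 0 < C) (w : ℝ → ℝ)
    (hdiff : ∀ t ≥ C + 1, DifferentiableAt ℝ w t)
    (hineq : ∀ t ≥ C + 1,
      deriv w t ≤ -2 * (t + C)⁻¹ * w t + C * (t - C) ^ (-3 : ℤ)) :
    ∃ C' T : ℝ, ∀ t ≥ T, w t ≤ C' * (t - C) ^ (-2 : ℤ) * Real.log t := by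
  refine ⟨C * (2 * C + 1) ^ 2 + |(2 * C + 1) ^ 2 * w (C + 1)|, max (C + 1) (exp 1),
    fun t ht => ?_⟩
  have htC : C + 1 ≤ t := le_of_max_le_left ht
  refine le_mul_zpow_neg_two_mul_log hC.le (by positivity) htC (le_of_max_le_right ht) ?_
  linarith [add_sq_mul_le_log_of_deriv_le hC.le hdiff hineq htC]
end

section
/- For a graphical hypersurface Σ = {q = u} in (ℝ×T^{n-1}, ǧ) with ǧ = e^{2ψ}g', the mean curvature is Ȟ = e^{-ψ}(-ρΔ'u + ρ^{-1}Ψ^{-1}Ψ' Σᵢ(∂u/∂θⁱ)² + (n-1)ρ^{-1}ψ' + ρ^{-1}Ψ^{-1}Ψ'), where Δ' is the Laplace-Beltrami operator of the induced metric γ' from g'. -/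
noncomputable section

/-- Partial derivative of `f` in the `i`-th coordinate direction. -/
def pd {n : ℕ} (i : Fin n) (f : (Fin n → ℝ) → ℝ) (x : Fin n → ℝ) : ℝ :=
  fderiv ℝ f x (Pi.single i 1)

/-- Christoffel symbols `Γ^k_{ij}` of a metric `g` with pointwise inverse `ginv`. -/
def christoffel {n : ℕ} (g ginv : (Fin n → ℝ) → Matrix (Fin n) (Fin n) ℝ)
    (x : Fin n → ℝ) (k i j : Fin n) : ℝ :=
  (1 / 2) * ∑ l, ginv x k l *
    (pd i (fun y => g y j l) x + pd j (fun y => g y i l) x - pd l (fun y => g y i j) x)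

/-- Riemann curvature tensor `R^l_{kij}` of the metric `g`. -/
def riemannUp {n : ℕ} (g ginv : (Fin n → ℝ) → Matrix (Fin n) (Fin n) ℝ)
    (x : Fin n → ℝ) (l k i j : Fin n) : ℝ :=
  pd i (fun y => christoffel g ginv y l j k) x
    - pd j (fun y => christoffel g ginv y l i k) x
    + ∑ m, (christoffel g ginv x l i m * christoffel g ginv x m j k
        - christoffel g ginv x l j m * christoffel g ginv x m i k)

/-- Fully lowered Riemann curvature tensor `R_{abcd}`. -/
def riemannLow {n : ℕ} (g ginv : (Fin n → ℝ) → Matrix (Fin n) (Fin n) ℝ)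
    (x : Fin n → ℝ) (a b c d : Fin n) : ℝ :=
  ∑ l, g x a l * riemannUp g ginv x l b c d

/-- The warped product metric `g' = dq² + Ψ(q)² dξ² + Σᵢ (dθⁱ)²` on `ℝ × T^{n-1}`,
in coordinates `x 0 = q`, `x 1 = ξ`, `x i = θⁱ` for `i ≥ 2`. -/
def gW {m : ℕ} (Ψ : ℝ → ℝ) (x : Fin (m + 2) → ℝ) : Matrix (Fin (m + 2)) (Fin (m + 2)) ℝ :=
  Matrix.diagonal (fun i => if i = 1 then (Ψ (x 0)) ^ 2 else 1)

/-- The pointwise inverse of the warped product metric `gW`. -/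
def gWinv {m : ℕ} (Ψ : ℝ → ℝ) (x : Fin (m + 2) → ℝ) :
    Matrix (Fin (m + 2)) (Fin (m + 2)) ℝ :=
  Matrix.diagonal (fun i => if i = 1 then ((Ψ (x 0)) ^ 2)⁻¹ else 1)

end

noncomputable section

/-- The graph embedding `F(ξ,θ) = (u(ξ,θ), ξ, θ)` of `T^{n-1}` into `ℝ × T^{n-1}`;
surface coordinate `0` is `ξ` and surface coordinates `a ≥ 1` are the `θ`'s. -/
def graphF {m : ℕ} (u : (Fin (m + 1) → ℝ) → ℝ) (y : Fin (m + 1) → ℝ) :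
    Fin (m + 2) → ℝ :=
  fun α => if h : α = 0 then u y else y (α.pred h)

/-- The coordinate tangent vectors `∂F^α/∂x^a` of the graph. -/
def graphT {m : ℕ} (u : (Fin (m + 1) → ℝ) → ℝ) (y : Fin (m + 1) → ℝ)
    (a : Fin (m + 1)) (α : Fin (m + 2)) : ℝ :=
  pd a (fun z => graphF u z α) y

/-- The slope `ρ` of the graph, `ρ² = 1 + Ψ(u)^{-2} u_ξ² + Σᵢ u_{θⁱ}²`. -/
def graphRho {m : ℕ} (Ψ : ℝ → ℝ) (u : (Fin (m + 1) → ℝ) → ℝ)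
    (y : Fin (m + 1) → ℝ) : ℝ :=
  Real.sqrt (1 + ∑ a : Fin (m + 1),
    (if a = 0 then ((Ψ (u y)) ^ 2)⁻¹ else 1) * (pd a u y) ^ 2)

/-- The lowered components `ν'_α` of the outward unit normal
`ν' = ρ⁻¹(∂_q - Ψ^{-2} u_ξ ∂_ξ - Σ u_{θⁱ} ∂_{θⁱ})` with respect to `g'`. -/
def graphNuLow {m : ℕ} (Ψ : ℝ → ℝ) (u : (Fin (m + 1) → ℝ) → ℝ)
    (y : Fin (m + 1) → ℝ) (α : Fin (m + 2)) : ℝ :=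
  (graphRho Ψ u y)⁻¹ * (if h : α = 0 then 1 else -(pd (α.pred h) u y))

/-- The second fundamental form `h'_{ab} = -g'(∇'_{∂ₐF} ∂_bF, ν')` of the graph with
respect to the warped product metric `g'`. -/
def graphSff {m : ℕ} (Ψ : ℝ → ℝ) (u : (Fin (m + 1) → ℝ) → ℝ)
    (y : Fin (m + 1) → ℝ) (a b : Fin (m + 1)) : ℝ :=
  -∑ α, graphNuLow Ψ u y α *
    (pd a (fun z => graphT u z b α) y
      + ∑ β, ∑ γ, christoffel (gW Ψ) (gWinv Ψ) (graphF u y) α β γ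
          * graphT u y a β * graphT u y b γ)

end

noncomputable section

/-- The induced metric `γ'_{ab} = γ̂_{ab} + u_a u_b` on the graph, where
`γ̂ = Ψ(u)² dξ² + Σᵢ (dθⁱ)²`. -/
def graphInd {m : ℕ} (Ψ : ℝ → ℝ) (u : (Fin (m + 1) → ℝ) → ℝ)
    (y : Fin (m + 1) → ℝ) : Matrix (Fin (m + 1)) (Fin (m + 1)) ℝ :=
  Matrix.diagonal (fun a => if a = 0 then (Ψ (u y)) ^ 2 else 1)
    + Matrix.of (fun a b => pd a u y * pd b u y)

/-- The Hessian `D'_a D'_b u` of the height function `u` viewed as a function on the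
graph with its induced metric `γ'`. -/
def graphHess {m : ℕ} (Ψ : ℝ → ℝ) (u : (Fin (m + 1) → ℝ) → ℝ)
    (y : Fin (m + 1) → ℝ) (a b : Fin (m + 1)) : ℝ :=
  pd a (fun z => pd b u z) y
    - ∑ c, christoffel (graphInd Ψ u) (fun z => (graphInd Ψ u z)⁻¹) y c a b * pd c u y

end

noncomputable section

/-- The conformal metric `ǧ = e^{2ψ(q)} g'` where `g' = dq² + Ψ(q)²dξ² + Σ(dθⁱ)²`. -/
def gC {m : ℕ} (Ψ ψ : ℝ → ℝ) (x : Fin (m + 2) → ℝ) :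
    Matrix (Fin (m + 2)) (Fin (m + 2)) ℝ :=
  Real.exp (2 * ψ (x 0)) • gW Ψ x

/-- The pointwise inverse of the conformal metric `gC`. -/
def gCinv {m : ℕ} (Ψ ψ : ℝ → ℝ) (x : Fin (m + 2) → ℝ) :
    Matrix (Fin (m + 2)) (Fin (m + 2)) ℝ :=
  Real.exp (-(2 * ψ (x 0))) • gWinv Ψ x

/-- The second fundamental form `ȟ_{ab}` of the graph with respect to the conformal
metric `ǧ = e^{2ψ} g'` (whose unit normal is `ν̌ = e^{-ψ}ν'`, with lowered components
`e^{ψ} ν'_α`). -/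
def graphSffC {m : ℕ} (Ψ ψ : ℝ → ℝ) (u : (Fin (m + 1) → ℝ) → ℝ)
    (y : Fin (m + 1) → ℝ) (a b : Fin (m + 1)) : ℝ :=
  -∑ α, Real.exp (ψ (u y)) * graphNuLow Ψ u y α *
    (pd a (fun z => graphT u z b α) y
      + ∑ β, ∑ γ, christoffel (gC Ψ ψ) (gCinv Ψ ψ) (graphF u y) α β γ
          * graphT u y a β * graphT u y b γ)

end


noncomputable section AuxToolkit
variable {n : ℕ}


lemma pd_const (i : Fin n) (c : ℝ) (x : Fin n → ℝ) : pd i (fun _ => c) x = 0 := by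
  simp [pd]

lemma pd_add (i : Fin n) {f g : (Fin n → ℝ) → ℝ} {x : Fin n → ℝ}
    (hf : DifferentiableAt ℝ f x) (hg : DifferentiableAt ℝ g x) :
    pd i (fun z => f z + g z) x = pd i f x + pd i g x := by
  simp [pd, fderiv_fun_add hf hg]

lemma pd_mul (i : Fin n) {f g : (Fin n → ℝ) → ℝ} {x : Fin n → ℝ}
    (hf : DifferentiableAt ℝ f x) (hg : DifferentiableAt ℝ g x) :
    pd i (fun z => f z * g z) x = pd i f x * g x + f x * pd i g x := by
  simp [pd, fderiv_fun_mul hf hg]; ring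

lemma pd_coord (i j : Fin n) (x : Fin n → ℝ) :
    pd i (fun z => z j) x = if j = i then 1 else 0 := by
  have : (fun z : Fin n → ℝ => z j) = (ContinuousLinearMap.proj j : (Fin n → ℝ) →L[ℝ] ℝ) := rfl
  rw [pd, this, ContinuousLinearMap.fderiv]
  simp [Pi.single_apply]

lemma pd_comp (i : Fin n) {f : (Fin n → ℝ) → ℝ} {g : ℝ → ℝ} {x : Fin n → ℝ}
    (hg : DifferentiableAt ℝ g (f x)) (hf : DifferentiableAt ℝ f x) :
    pd i (fun z => g (f z)) x = deriv g (f x) * pd i f x := by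
  have H : HasFDerivAt (fun z => g (f z)) (deriv g (f x) • fderiv ℝ f x) x :=
    hg.hasDerivAt.comp_hasFDerivAt x hf.hasFDerivAt
  rw [pd, H.fderiv]
  simp [pd, mul_comm]

lemma contDiff_pd (i : Fin n) {f : (Fin n → ℝ) → ℝ} (hf : ContDiff ℝ (⊤ : ℕ∞) f) :
    ContDiff ℝ (⊤ : ℕ∞) (pd i f) :=
  (hf.fderiv_right (by simp)).clm_apply contDiff_const

lemma pd_pd_symm {f : (Fin n → ℝ) → ℝ} (hf : ContDiff ℝ (⊤ : ℕ∞) f) (a b : Fin n) (x : Fin n → ℝ) :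
    pd a (fun z => pd b f z) x = pd b (fun z => pd a f z) x := by
  have hd : DifferentiableAt ℝ (fderiv ℝ f) x :=
    ((hf.fderiv_right (m := 1) (WithTop.coe_le_coe.mpr le_top)).differentiable one_ne_zero) x
  have key : ∀ (c d : Fin n),
      pd c (fun z => pd d f z) x = fderiv ℝ (fderiv ℝ f) x (Pi.single c 1) (Pi.single d 1) := by
    intro c d
    have : (fun z => pd d f z) = fun z => (fderiv ℝ f z) (Pi.single d 1) := rfl
    rw [pd, this, fderiv_clm_apply hd (differentiableAt_const _)]
    simp
  rw [key a b, key b a]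
  exact (hf.contDiffAt.isSymmSndFDerivAt (by rw [minSmoothness_of_isRCLikeNormedField]; exact WithTop.coe_le_coe.mpr (le_top : (2 : ℕ∞) ≤ ⊤))) _ _


lemma pd_const_add (i : Fin n) (c : ℝ) {g : (Fin n → ℝ) → ℝ} {x : Fin n → ℝ} :
    pd i (fun z => c + g z) x = pd i g x := by
  unfold pd
  rw [fderiv_const_add]

lemma pd_comp_coord (i j : Fin n) {g : ℝ → ℝ} (hg : Differentiable ℝ g) (x : Fin n → ℝ) :
    pd i (fun z => g (z j)) x = if j = i then deriv g (x j) else 0 := by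
  have hf : DifferentiableAt ℝ (fun z : Fin n → ℝ => z j) x :=
    (ContinuousLinearMap.proj j : (Fin n → ℝ) →L[ℝ] ℝ).differentiableAt
  rw [pd_comp i (hg (x j)) hf, pd_coord, mul_ite, mul_one, mul_zero]

section Diag
variable {m : ℕ} (A B : ℝ → ℝ)

/-- entries of the diagonal warped metric -/
lemma pd_diag_entry (hA : Differentiable ℝ A) (hB : Differentiable ℝ B)
    (x : Fin (m + 2) → ℝ) (i j l : Fin (m + 2)) :
    pd i (fun y => Matrix.diagonal (fun t => if t = 1 then A (y 0) else B (y 0)) j l) x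
      = if j = l ∧ i = 0 then (if j = 1 then deriv A (x 0) else deriv B (x 0)) else 0 := by
  by_cases hjl : j = l
  · subst hjl
    simp only [Matrix.diagonal_apply_eq, true_and]
    by_cases hj1 : j = 1
    · simp only [hj1, if_true, if_pos rfl]
      rw [pd_comp_coord i 0 hA x]
      simp [eq_comm]
    · simp only [hj1, if_false]
      rw [pd_comp_coord i 0 hB x]
      simp [eq_comm]
  · simp [Matrix.diagonal_apply_ne _ hjl, pd_const, hjl]

lemma christoffel_diag (hA : Differentiable ℝ A) (hB : Differentiable ℝ B)
    (x : Fin (m + 2) → ℝ) (k i j : Fin (m + 2)) :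
    christoffel (fun y => Matrix.diagonal (fun t => if t = 1 then A (y 0) else B (y 0)))
      (fun y => Matrix.diagonal (fun t => if t = 1 then (A (y 0))⁻¹ else (B (y 0))⁻¹)) x k i j
    = (1 / 2) * (if k = 1 then (A (x 0))⁻¹ else (B (x 0))⁻¹) *
        ((if j = k ∧ i = 0 then (if j = 1 then deriv A (x 0) else deriv B (x 0)) else 0)
          + (if i = k ∧ j = 0 then (if i = 1 then deriv A (x 0) else deriv B (x 0)) else 0)
          - (if i = j ∧ k = 0 then (if i = 1 then deriv A (x 0) else deriv B (x 0)) else 0)) := by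
  rw [christoffel]
  have hsum : ∀ l : Fin (m + 2),
      Matrix.diagonal (fun t => if t = 1 then (A (x 0))⁻¹ else (B (x 0))⁻¹) k l *
        (pd i (fun y => Matrix.diagonal (fun t => if t = 1 then A (y 0) else B (y 0)) j l) x
          + pd j (fun y => Matrix.diagonal (fun t => if t = 1 then A (y 0) else B (y 0)) i l) x
          - pd l (fun y => Matrix.diagonal (fun t => if t = 1 then A (y 0) else B (y 0)) i j) x)
      = if l = k then (if k = 1 then (A (x 0))⁻¹ else (B (x 0))⁻¹) *
          ((if j = k ∧ i = 0 then (if j = 1 then deriv A (x 0) else deriv B (x 0)) else 0)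
            + (if i = k ∧ j = 0 then (if i = 1 then deriv A (x 0) else deriv B (x 0)) else 0)
            - (if i = j ∧ k = 0 then (if i = 1 then deriv A (x 0) else deriv B (x 0)) else 0))
        else 0 := by
    intro l
    rw [pd_diag_entry A B hA hB, pd_diag_entry A B hA hB, pd_diag_entry A B hA hB]
    by_cases hlk : l = k
    · subst hlk
      rw [Matrix.diagonal_apply_eq, if_pos rfl]
    · rw [Matrix.diagonal_apply_ne' _ hlk, if_neg hlk, zero_mul]
  rw [Finset.sum_congr rfl (fun l _ => hsum l), Finset.sum_ite_eq' Finset.univ k]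
  simp [mul_assoc]

end Diag

section GC
variable {m : ℕ} (Ψ ψ : ℝ → ℝ)

lemma gC_eq : gC (m := m) Ψ ψ = fun x => Matrix.diagonal
    (fun t => if t = 1 then Real.exp (2 * ψ (x 0)) * (Ψ (x 0)) ^ 2
      else Real.exp (2 * ψ (x 0))) := by
  funext x
  ext a b
  by_cases hab : a = b
  · subst hab
    by_cases h : a = 1 <;>
      simp [gC, gW, Matrix.smul_apply, Matrix.diagonal_apply_eq, h, smul_eq_mul]
  · simp [gC, gW, Matrix.smul_apply, Matrix.diagonal_apply_ne _ hab, hab]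

lemma gCinv_eq : gCinv (m := m) Ψ ψ = fun x => Matrix.diagonal
    (fun t => if t = 1 then (Real.exp (2 * ψ (x 0)) * (Ψ (x 0)) ^ 2)⁻¹
      else (Real.exp (2 * ψ (x 0)))⁻¹) := by
  funext x
  ext a b
  by_cases hab : a = b
  · subst hab
    by_cases h : a = 1 <;>
      simp [gCinv, gWinv, Matrix.smul_apply, Matrix.diagonal_apply_eq, h, smul_eq_mul,
        Real.exp_neg, mul_inv, mul_comm]
  · simp [gCinv, gWinv, Matrix.smul_apply, Matrix.diagonal_apply_ne _ hab, hab]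

lemma christoffel_gC (hΨ : ContDiff ℝ (⊤ : ℕ∞) Ψ) (hψ : ContDiff ℝ (⊤ : ℕ∞) ψ) (hpos : ∀ q, 0 < Ψ q)
    (x : Fin (m + 2) → ℝ) (k i j : Fin (m + 2)) :
    christoffel (gC Ψ ψ) (gCinv Ψ ψ) x k i j
    = (if j = k ∧ i = 0 then
          (if j = 1 then deriv ψ (x 0) + deriv Ψ (x 0) / Ψ (x 0) else deriv ψ (x 0)) else 0)
      + (if i = k ∧ j = 0 then
          (if i = 1 then deriv ψ (x 0) + deriv Ψ (x 0) / Ψ (x 0) else deriv ψ (x 0)) else 0)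
      - (if i = j ∧ k = 0 then
          (if i = 1 then deriv ψ (x 0) * (Ψ (x 0)) ^ 2 + Ψ (x 0) * deriv Ψ (x 0)
            else deriv ψ (x 0)) else 0) := by
  have hψd : Differentiable ℝ ψ := hψ.differentiable (by simp)
  have hΨd : Differentiable ℝ Ψ := hΨ.differentiable (by simp)
  have hB : ∀ q, HasDerivAt (fun q => Real.exp (2 * ψ q))
      (Real.exp (2 * ψ q) * (2 * deriv ψ q)) q :=
    fun q => ((hψd q).hasDerivAt.const_mul 2).exp
  have hA : ∀ q, HasDerivAt (fun q => Real.exp (2 * ψ q) * (Ψ q) ^ 2)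
      (Real.exp (2 * ψ q) * (2 * deriv ψ q) * (Ψ q) ^ 2
        + Real.exp (2 * ψ q) * (2 * Ψ q ^ 1 * deriv Ψ q)) q :=
    fun q => (hB q).mul ((hΨd q).hasDerivAt.pow 2)
  have hAdiff : Differentiable ℝ (fun q => Real.exp (2 * ψ q) * (Ψ q) ^ 2) :=
    fun q => (hA q).differentiableAt
  have hBdiff : Differentiable ℝ (fun q => Real.exp (2 * ψ q)) :=
    fun q => (hB q).differentiableAt
  rw [gC_eq, gCinv_eq, christoffel_diag _ _ hAdiff hBdiff, (hA (x 0)).deriv, (hB (x 0)).deriv]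
  have hP : Ψ (x 0) ≠ 0 := (hpos (x 0)).ne'
  have hE : Real.exp (2 * ψ (x 0)) ≠ 0 := Real.exp_ne_zero _
  set e := Real.exp (2 * ψ (x 0)) with he
  set P := Ψ (x 0) with hPd
  set s := deriv ψ (x 0)
  set P' := deriv Ψ (x 0)
  set DA : ℝ := e * (2 * s) * P ^ 2 + e * (2 * P ^ 1 * P')
  set DB : ℝ := e * (2 * s)
  have h1 : (1 / 2 : ℝ) * (if k = 1 then (e * P ^ 2)⁻¹ else e⁻¹) *
      (if j = k ∧ i = 0 then (if j = 1 then DA else DB) else 0)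
      = if j = k ∧ i = 0 then (if j = 1 then s + P' / P else s) else 0 := by
    by_cases h : j = k ∧ i = 0
    · rw [if_pos h, if_pos h, ← h.1]
      by_cases hj : j = 1 <;> simp only [hj, if_true, if_false, DA, DB] <;> field_simp <;> ring
    · rw [if_neg h, if_neg h, mul_zero]
  have h2 : (1 / 2 : ℝ) * (if k = 1 then (e * P ^ 2)⁻¹ else e⁻¹) *
      (if i = k ∧ j = 0 then (if i = 1 then DA else DB) else 0)
      = if i = k ∧ j = 0 then (if i = 1 then s + P' / P else s) else 0 := by
    by_cases h : i = k ∧ j = 0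
    · rw [if_pos h, if_pos h, ← h.1]
      by_cases hi : i = 1 <;> simp only [hi, if_true, if_false, DA, DB] <;> field_simp <;> ring
    · rw [if_neg h, if_neg h, mul_zero]
  have h3 : (1 / 2 : ℝ) * (if k = 1 then (e * P ^ 2)⁻¹ else e⁻¹) *
      (if i = j ∧ k = 0 then (if i = 1 then DA else DB) else 0)
      = if i = j ∧ k = 0 then (if i = 1 then s * P ^ 2 + P * P' else s) else 0 := by
    by_cases h : i = j ∧ k = 0
    · have hk1 : ¬(k = 1) := by rw [h.2]; exact Fin.zero_ne_one
      rw [if_pos h, if_pos h, if_neg hk1]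
      by_cases hi : i = 1 <;> simp only [hi, if_true, if_false, DA, DB] <;> field_simp <;> ring
    · rw [if_neg h, if_neg h, mul_zero]
  calc (1 / 2 : ℝ) * (if k = 1 then (e * P ^ 2)⁻¹ else e⁻¹) *
      ((if j = k ∧ i = 0 then (if j = 1 then DA else DB) else 0)
        + (if i = k ∧ j = 0 then (if i = 1 then DA else DB) else 0)
        - (if i = j ∧ k = 0 then (if i = 1 then DA else DB) else 0))
      = (1 / 2 : ℝ) * (if k = 1 then (e * P ^ 2)⁻¹ else e⁻¹) *
          (if j = k ∧ i = 0 then (if j = 1 then DA else DB) else 0)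
        + (1 / 2 : ℝ) * (if k = 1 then (e * P ^ 2)⁻¹ else e⁻¹) *
          (if i = k ∧ j = 0 then (if i = 1 then DA else DB) else 0)
        - (1 / 2 : ℝ) * (if k = 1 then (e * P ^ 2)⁻¹ else e⁻¹) *
          (if i = j ∧ k = 0 then (if i = 1 then DA else DB) else 0) := by ring
    _ = _ := by rw [h1, h2, h3]

end GC

noncomputable section GraphAux

section Graph
variable {m : ℕ} (Ψ ψ : ℝ → ℝ) (u : (Fin (m + 1) → ℝ) → ℝ) (y : Fin (m + 1) → ℝ)

lemma graphF_zero (z : Fin (m + 1) → ℝ) : graphF u z 0 = u z := by simp [graphF]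

lemma graphF_succ (z : Fin (m + 1) → ℝ) (c : Fin (m + 1)) : graphF u z c.succ = z c := by
  simp [graphF, Fin.succ_ne_zero]

lemma graphT_zero (a : Fin (m + 1)) : graphT u y a 0 = pd a u y := by
  have : (fun z => graphF u z 0) = u := funext fun z => graphF_zero u z
  rw [graphT, this]

lemma graphT_succ (a c : Fin (m + 1)) : graphT u y a c.succ = if c = a then 1 else 0 := by
  have : (fun z => graphF u z c.succ) = fun z => z c := funext fun z => graphF_succ u z c
  rw [graphT, this, pd_coord]

lemma graphNuLow_zero : graphNuLow Ψ u y 0 = (graphRho Ψ u y)⁻¹ := by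
  simp [graphNuLow]

lemma graphNuLow_succ (c : Fin (m + 1)) :
    graphNuLow Ψ u y c.succ = (graphRho Ψ u y)⁻¹ * (-(pd c u y)) := by
  simp [graphNuLow, Fin.succ_ne_zero]

lemma pd_graphT_zero (a b : Fin (m + 1)) :
    pd a (fun z => graphT u z b 0) y = pd a (fun z => pd b u z) y := by
  have : (fun z => graphT u z b 0) = fun z => pd b u z := funext fun z => graphT_zero u z b
  rw [this]

lemma pd_graphT_succ (a b c : Fin (m + 1)) :
    pd a (fun z => graphT u z b c.succ) y = 0 := by
  have : (fun z => graphT u z b c.succ) = fun _ => if c = b then (1:ℝ) else 0 :=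
    funext fun z => graphT_succ u z b c
  rw [this, pd_const]

lemma sum_TT (G : Fin (m + 2) → Fin (m + 2) → ℝ) (a b : Fin (m + 1)) :
    ∑ β, ∑ γ, G β γ * graphT u y a β * graphT u y b γ
    = G 0 0 * pd a u y * pd b u y + G 0 b.succ * pd a u y + G a.succ 0 * pd b u y
      + G a.succ b.succ := by
  rw [Fin.sum_univ_succ]
  have inner : ∀ β : Fin (m + 2), ∑ γ, G β γ * graphT u y a β * graphT u y b γ
      = G β 0 * graphT u y a β * pd b u y + G β b.succ * graphT u y a β := by
    intro β
    rw [Fin.sum_univ_succ, graphT_zero]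
    congr 1
    have : ∀ c : Fin (m + 1), G β c.succ * graphT u y a β * graphT u y b c.succ
        = if c = b then G β c.succ * graphT u y a β else 0 := by
      intro c
      rw [graphT_succ, mul_ite, mul_one, mul_zero]
    rw [Finset.sum_congr rfl fun c _ => this c, Finset.sum_ite_eq' Finset.univ b]
    simp
  rw [inner 0, graphT_zero]
  have outer : ∀ c : Fin (m + 1),
      (∑ γ, G c.succ γ * graphT u y a c.succ * graphT u y b γ)
      = if c = a then G c.succ 0 * pd b u y + G c.succ b.succ else 0 := by
    intro c
    rw [inner c.succ, graphT_succ]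
    by_cases h : c = a <;> simp [h]
  rw [Finset.sum_congr rfl fun c _ => outer c, Finset.sum_ite_eq' Finset.univ a]
  simp
  ring

lemma succ_eq_one_iff (c : Fin (m + 1)) : (c.succ = (1 : Fin (m + 2))) ↔ c = 0 := by
  rw [← Fin.succ_zero_eq_one, Fin.succ_inj]

lemma sffC_explicit (hΨ : ContDiff ℝ (⊤ : ℕ∞) Ψ) (hψ : ContDiff ℝ (⊤ : ℕ∞) ψ) (hpos : ∀ q, 0 < Ψ q)
    (a b : Fin (m + 1)) :
    graphSffC Ψ ψ u y a b = -(Real.exp (ψ (u y)) * (graphRho Ψ u y)⁻¹) *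
      (pd a (fun z => pd b u z) y
        - deriv ψ (u y) * graphInd Ψ u y a b
        - (if a = 0 ∧ b = 0 then Ψ (u y) * deriv Ψ (u y) else 0)
        - deriv Ψ (u y) / Ψ (u y) * ((if a = 0 then (1:ℝ) else 0) + (if b = 0 then (1:ℝ) else 0))
            * (pd a u y * pd b u y)) := by
  have hx0 : graphF u y 0 = u y := graphF_zero u y
  set s := deriv ψ (u y) with hs
  set P := Ψ (u y) with hP
  set P' := deriv Ψ (u y) with hP'
  set r := graphRho Ψ u y with hr
  set E := Real.exp (ψ (u y)) with hE
  have hΓ : ∀ k i j, christoffel (gC Ψ ψ) (gCinv Ψ ψ) (graphF u y) k i j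
      = (if j = k ∧ i = 0 then (if j = 1 then s + P' / P else s) else 0)
        + (if i = k ∧ j = 0 then (if i = 1 then s + P' / P else s) else 0)
        - (if i = j ∧ k = 0 then (if i = 1 then s * P ^ 2 + P * P' else s) else 0) := by
    intro k i j
    rw [christoffel_gC Ψ ψ hΨ hψ hpos, hx0]
  have hΓ00 : christoffel (gC Ψ ψ) (gCinv Ψ ψ) (graphF u y) 0 0 0 = s := by
    rw [hΓ]; simp [Fin.zero_ne_one]
  have hΓ00s : ∀ c : Fin (m+1), christoffel (gC Ψ ψ) (gCinv Ψ ψ) (graphF u y) 0 0 c.succ = 0 := by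
    intro c; rw [hΓ]; simp [Fin.succ_ne_zero, (Fin.succ_ne_zero c).symm]
  have hΓ0s0 : ∀ c : Fin (m+1), christoffel (gC Ψ ψ) (gCinv Ψ ψ) (graphF u y) 0 c.succ 0 = 0 := by
    intro c; rw [hΓ]; simp [Fin.succ_ne_zero, (Fin.succ_ne_zero c).symm]
  have hΓ0ss : ∀ c d : Fin (m+1), christoffel (gC Ψ ψ) (gCinv Ψ ψ) (graphF u y) 0 c.succ d.succ
      = -(if c = d then (if c = 0 then s * P ^ 2 + P * P' else s) else 0) := by
    intro c d; rw [hΓ]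
    simp [Fin.succ_ne_zero, (Fin.succ_ne_zero c).symm, (Fin.succ_ne_zero d).symm,
      Fin.succ_inj, succ_eq_one_iff]
  have hΓs00 : ∀ c : Fin (m+1), christoffel (gC Ψ ψ) (gCinv Ψ ψ) (graphF u y) c.succ 0 0 = 0 := by
    intro c; rw [hΓ]; simp [Fin.succ_ne_zero, (Fin.succ_ne_zero c).symm]
  have hΓs0s : ∀ c d : Fin (m+1),
      christoffel (gC Ψ ψ) (gCinv Ψ ψ) (graphF u y) c.succ 0 d.succ
      = if d = c then (if d = 0 then s + P' / P else s) else 0 := by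
    intro c d; rw [hΓ]
    simp [Fin.succ_ne_zero, (Fin.succ_ne_zero c).symm, (Fin.succ_ne_zero d).symm,
      Fin.succ_inj, succ_eq_one_iff]
  have hΓss0 : ∀ c d : Fin (m+1),
      christoffel (gC Ψ ψ) (gCinv Ψ ψ) (graphF u y) c.succ d.succ 0
      = if d = c then (if d = 0 then s + P' / P else s) else 0 := by
    intro c d; rw [hΓ]
    simp [Fin.succ_ne_zero, (Fin.succ_ne_zero c).symm, (Fin.succ_ne_zero d).symm,
      Fin.succ_inj, succ_eq_one_iff]
  have hΓsss : ∀ c d e : Fin (m+1),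
      christoffel (gC Ψ ψ) (gCinv Ψ ψ) (graphF u y) c.succ d.succ e.succ = 0 := by
    intro c d e; rw [hΓ]
    simp [Fin.succ_ne_zero, (Fin.succ_ne_zero c).symm]
  rw [graphSffC, Fin.sum_univ_succ]
  rw [sum_TT u y _ a b, pd_graphT_zero, graphNuLow_zero]
  rw [hΓ00, hΓ00s, hΓ0s0, hΓ0ss]
  have hterm : ∀ c : Fin (m + 1),
      E * graphNuLow Ψ u y c.succ *
        (pd a (fun z => graphT u z b c.succ) y
          + ∑ β, ∑ γ, christoffel (gC Ψ ψ) (gCinv Ψ ψ) (graphF u y) c.succ β γ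
              * graphT u y a β * graphT u y b γ)
      = E * (r⁻¹ * (-(pd c u y))) *
          ((if b = c then (if b = 0 then s + P' / P else s) else 0) * pd a u y
            + (if a = c then (if a = 0 then s + P' / P else s) else 0) * pd b u y) := by
    intro c
    rw [sum_TT u y _ a b, pd_graphT_succ, graphNuLow_succ, hΓs00, hΓs0s, hΓss0, hΓsss]
    ring
  rw [Finset.sum_congr rfl fun c _ => hterm c]
  have hcollapse : ∑ c : Fin (m + 1), E * (r⁻¹ * (-(pd c u y))) *
      ((if b = c then (if b = 0 then s + P' / P else s) else 0) * pd a u y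
        + (if a = c then (if a = 0 then s + P' / P else s) else 0) * pd b u y)
      = E * (r⁻¹ * (-(pd b u y))) * ((if b = 0 then s + P' / P else s) * pd a u y)
        + E * (r⁻¹ * (-(pd a u y))) * ((if a = 0 then s + P' / P else s) * pd b u y) := by
    have : ∀ c : Fin (m + 1), E * (r⁻¹ * (-(pd c u y))) *
        ((if b = c then (if b = 0 then s + P' / P else s) else 0) * pd a u y
          + (if a = c then (if a = 0 then s + P' / P else s) else 0) * pd b u y)
        = (if c = b then E * (r⁻¹ * (-(pd c u y))) * ((if b = 0 then s + P' / P else s) * pd a u y) else 0)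
          + (if c = a then E * (r⁻¹ * (-(pd c u y))) * ((if a = 0 then s + P' / P else s) * pd b u y) else 0) := by
      intro c
      by_cases h1 : c = b <;> by_cases h2 : c = a
      · rw [if_pos h1.symm, if_pos h2.symm, if_pos h1, if_pos h2]; ring
      · rw [if_pos h1.symm, if_neg (show ¬ a = c from fun h => h2 h.symm), if_pos h1, if_neg h2]; ring
      · rw [if_neg (show ¬ b = c from fun h => h1 h.symm), if_pos h2.symm, if_neg h1, if_pos h2]; ring
      · rw [if_neg (show ¬ b = c from fun h => h1 h.symm), if_neg (show ¬ a = c from fun h => h2 h.symm), if_neg h1, if_neg h2]; ring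
    rw [Finset.sum_congr rfl fun c _ => this c, Finset.sum_add_distrib,
      Finset.sum_ite_eq' Finset.univ b, Finset.sum_ite_eq' Finset.univ a]
    simp
  rw [hcollapse]
  have hind : graphInd Ψ u y a b
      = (if a = b then (if a = 0 then P ^ 2 else 1) else 0) + pd a u y * pd b u y := by
    simp [graphInd, Matrix.diagonal, Matrix.add_apply, Matrix.of_apply, hP]
  rw [hind]
  have hPne : P ≠ 0 := (hpos (u y)).ne'
  by_cases ha : a = 0 <;> by_cases hb : b = 0 <;> by_cases hab : a = b
  · simp only [ha, hb, hab, if_pos rfl, and_self, if_true]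
    ring
  · exact absurd (ha.trans hb.symm) hab
  · exact absurd (hab.symm.trans ha) hb
  · simp [ha, hb, hab, eq_comm]
    ring
  · exact absurd (hab.trans hb) ha
  · simp [ha, hb, hab, eq_comm]
    ring
  · simp [ha, hb, hab, eq_comm]
    ring
  · simp [ha, hb, hab, eq_comm]
    ring

section Ind
variable (hΨ : ContDiff ℝ (⊤ : ℕ∞) Ψ) (hψ : ContDiff ℝ (⊤ : ℕ∞) ψ) (hpos : ∀ q, 0 < Ψ q)
    (hu : ContDiff ℝ (⊤ : ℕ∞) u)

/-- abbreviations -/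
def Dq : Fin (m + 1) → ℝ := fun a => if a = 0 then ((Ψ (u y)) ^ 2)⁻¹ else 1
def R2 : ℝ := 1 + ∑ a : Fin (m + 1), Dq Ψ u y a * (pd a u y) ^ 2
def ginvE : Matrix (Fin (m + 1)) (Fin (m + 1)) ℝ := Matrix.of fun a b =>
  (if a = b then Dq Ψ u y a else 0)
    - Dq Ψ u y a * pd a u y * Dq Ψ u y b * pd b u y / R2 Ψ u y

lemma R2_pos (hpos : ∀ q, 0 < Ψ q) : 0 < R2 Ψ u y := by
  have : ∀ a : Fin (m + 1), 0 ≤ Dq Ψ u y a * (pd a u y) ^ 2 := by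
    intro a
    apply mul_nonneg _ (sq_nonneg _)
    unfold Dq
    by_cases h : a = 0 <;> simp [h]
    positivity
  have hsum : 0 ≤ ∑ a : Fin (m + 1), Dq Ψ u y a * (pd a u y) ^ 2 :=
    Finset.sum_nonneg fun a _ => this a
  unfold R2; linarith

lemma rho_eq_sqrt : graphRho Ψ u y = Real.sqrt (R2 Ψ u y) := rfl

lemma rho_pos (hpos : ∀ q, 0 < Ψ q) : 0 < graphRho Ψ u y := by
  rw [rho_eq_sqrt]; exact Real.sqrt_pos.mpr (R2_pos Ψ u y hpos)

lemma rho_mul_self (hpos : ∀ q, 0 < Ψ q) :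
    graphRho Ψ u y * graphRho Ψ u y = R2 Ψ u y := by
  rw [rho_eq_sqrt]; exact Real.mul_self_sqrt (R2_pos Ψ u y hpos).le

lemma graphInd_apply (a b : Fin (m + 1)) :
    graphInd Ψ u y a b = (if a = b then (if a = 0 then (Ψ (u y)) ^ 2 else 1) else 0)
      + pd a u y * pd b u y := by
  simp [graphInd, Matrix.add_apply, Matrix.diagonal, Matrix.of_apply]

lemma sum_Dq_p_sq : ∑ a : Fin (m + 1), Dq Ψ u y a * (pd a u y) ^ 2 = R2 Ψ u y - 1 := by
  unfold R2; ring

lemma graphInd_mul_ginvE (hpos : ∀ q, 0 < Ψ q) :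
    graphInd Ψ u y * ginvE Ψ u y = 1 := by
  have hP : Ψ (u y) ≠ 0 := (hpos (u y)).ne'
  have hR2 : R2 Ψ u y ≠ 0 := (R2_pos Ψ u y hpos).ne'
  ext a b
  rw [Matrix.mul_apply]
  set P := Ψ (u y)
  set r2 := R2 Ψ u y
  have hdD : (if a = (0:Fin (m+1)) then P ^ 2 else 1) * Dq Ψ u y a = 1 := by
    unfold Dq; by_cases h : a = 0 <;> simp [h]; exact div_self (pow_ne_zero 2 hP)
  have key : ∀ k : Fin (m + 1), graphInd Ψ u y a k * ginvE Ψ u y k b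
      = (if k = a then (if a = b then 1 else 0) else 0)
        + (if k = a then -(pd a u y * Dq Ψ u y b * pd b u y / r2) else 0)
        + (if k = b then pd a u y * Dq Ψ u y b * pd b u y else 0)
        + (-(pd a u y * Dq Ψ u y b * pd b u y / r2)) * (Dq Ψ u y k * (pd k u y) ^ 2) := by
    intro k
    rw [graphInd_apply]
    show ((if a = k then (if a = 0 then P ^ 2 else 1) else 0) + pd a u y * pd k u y)
        * ((if k = b then Dq Ψ u y k else 0)
            - Dq Ψ u y k * pd k u y * Dq Ψ u y b * pd b u y / r2) = _
    by_cases hka : k = a <;> by_cases hkb : k = b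
    · subst hka; subst hkb
      simp only [if_pos rfl]
      calc ((if k = 0 then P ^ 2 else 1) + pd k u y * pd k u y)
            * (Dq Ψ u y k - Dq Ψ u y k * pd k u y * Dq Ψ u y k * pd k u y / r2)
          = ((if k = 0 then P ^ 2 else 1) * Dq Ψ u y k) * (1 - pd k u y * Dq Ψ u y k * pd k u y / r2)
            + pd k u y * pd k u y * Dq Ψ u y k
            + (-(pd k u y * Dq Ψ u y k * pd k u y / r2)) * (Dq Ψ u y k * (pd k u y) ^ 2) := by
            ring
        _ = _ := by rw [hdD]; simp only [eq_self_iff_true, if_true]; ring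
    · subst hka
      rw [if_pos rfl, if_pos rfl, if_neg hkb, if_neg hkb, if_pos rfl, if_neg hkb]
      calc ((if k = 0 then P ^ 2 else 1) + pd k u y * pd k u y)
            * (0 - Dq Ψ u y k * pd k u y * Dq Ψ u y b * pd b u y / r2)
          = ((if k = 0 then P ^ 2 else 1) * Dq Ψ u y k) * (-(pd k u y * Dq Ψ u y b * pd b u y / r2))
            + (-(pd k u y * Dq Ψ u y b * pd b u y / r2)) * (Dq Ψ u y k * (pd k u y) ^ 2) := by ring
        _ = _ := by rw [hdD]; ring
    · subst hkb
      rw [if_neg (show ¬ a = k from fun h => hka h.symm), if_pos rfl,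
        if_neg (show ¬ k = a from hka), if_neg (show ¬ k = a from hka), if_pos rfl]
      ring
    · rw [if_neg (show ¬ a = k from fun h => hka h.symm), if_neg hkb,
        if_neg (show ¬ k = a from hka), if_neg (show ¬ k = a from hka), if_neg hkb]
      ring
  rw [Finset.sum_congr rfl fun k _ => key k]
  rw [Finset.sum_add_distrib, Finset.sum_add_distrib, Finset.sum_add_distrib,
    Finset.sum_ite_eq' Finset.univ a, Finset.sum_ite_eq' Finset.univ b,
    Finset.sum_ite_eq' Finset.univ a, ← Finset.mul_sum, sum_Dq_p_sq]
  simp only [Finset.mem_univ, if_true]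
  show _ = (1 : Matrix (Fin (m+1)) (Fin (m+1)) ℝ) a b
  rw [Matrix.one_apply]
  field_simp
  ring

lemma graphInd_inv (hpos : ∀ q, 0 < Ψ q) : (graphInd Ψ u y)⁻¹ = ginvE Ψ u y :=
  Matrix.inv_eq_right_inv (graphInd_mul_ginvE Ψ u y hpos)

lemma ginvE_apply (a b : Fin (m + 1)) : ginvE Ψ u y a b
    = (if a = b then Dq Ψ u y a else 0)
      - Dq Ψ u y a * pd a u y * Dq Ψ u y b * pd b u y / R2 Ψ u y := rfl

lemma ginvE_symm (a b : Fin (m + 1)) : ginvE Ψ u y a b = ginvE Ψ u y b a := by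
  rw [ginvE_apply, ginvE_apply]
  by_cases h : a = b
  · subst h; ring
  · rw [if_neg h, if_neg (fun hh => h hh.symm)]; ring

lemma sum_ginvE_p (hpos : ∀ q, 0 < Ψ q) (a : Fin (m + 1)) :
    ∑ b, ginvE Ψ u y a b * pd b u y
    = Dq Ψ u y a * pd a u y / R2 Ψ u y := by
  have key : ∀ b : Fin (m + 1), ginvE Ψ u y a b * pd b u y
      = (if b = a then Dq Ψ u y a * pd a u y else 0)
        - Dq Ψ u y a * pd a u y / R2 Ψ u y * (Dq Ψ u y b * (pd b u y) ^ 2) := by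
    intro b
    rw [ginvE_apply]
    by_cases h : a = b
    · subst h; rw [if_pos rfl, if_pos rfl]; ring
    · rw [if_neg h, if_neg (fun hh => h hh.symm)]; ring
  rw [Finset.sum_congr rfl fun b _ => key b, Finset.sum_sub_distrib,
    Finset.sum_ite_eq' Finset.univ a, ← Finset.mul_sum, sum_Dq_p_sq]
  simp only [Finset.mem_univ, if_true]
  have hR2 : R2 Ψ u y ≠ 0 := (R2_pos Ψ u y hpos).ne'
  field_simp
  ring

lemma trace_ginvE_Ind (hpos : ∀ q, 0 < Ψ q) :
    ∑ a, ∑ b, ginvE Ψ u y a b * graphInd Ψ u y a b = (m + 1 : ℝ) := by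
  have h1 : graphInd Ψ u y * ginvE Ψ u y = 1 := graphInd_mul_ginvE Ψ u y hpos
  have : ∀ a : Fin (m + 1), ∑ b, ginvE Ψ u y a b * graphInd Ψ u y a b
      = (graphInd Ψ u y * ginvE Ψ u y) a a := by
    intro a
    rw [Matrix.mul_apply]
    exact Finset.sum_congr rfl fun b _ => by rw [ginvE_symm, mul_comm]
  rw [Finset.sum_congr rfl fun a _ => this a, h1]
  simp [Matrix.one_apply, Finset.card_univ]

lemma pd_graphInd_entry (hΨ : ContDiff ℝ (⊤ : ℕ∞) Ψ) (hu : ContDiff ℝ (⊤ : ℕ∞) u) (i a b : Fin (m + 1)) :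
    pd i (fun z => graphInd Ψ u z a b) y
    = (if a = b ∧ a = 0 then 2 * Ψ (u y) * deriv Ψ (u y) * pd i u y else 0)
      + pd i (fun z => pd a u z) y * pd b u y + pd a u y * pd i (fun z => pd b u z) y := by
  have hfeq : (fun z => graphInd Ψ u z a b)
      = fun z => (if a = b then (if a = 0 then (Ψ (u z)) ^ 2 else 1) else 0)
          + pd a u z * pd b u z :=
    funext fun z => graphInd_apply Ψ u z a b
  rw [hfeq]
  have hud : DifferentiableAt ℝ u y := (hu.differentiable (by simp)) y
  have hpa : DifferentiableAt ℝ (fun z => pd a u z) y :=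
    ((contDiff_pd a hu).differentiable (by simp)) y
  have hpb : DifferentiableAt ℝ (fun z => pd b u z) y :=
    ((contDiff_pd b hu).differentiable (by simp)) y
  have hsq : DifferentiableAt ℝ (fun t : ℝ => (Ψ t) ^ 2) (u y) :=
    (((hΨ.differentiable (by simp)) (u y)).hasDerivAt.pow 2).differentiableAt
  have hmul : pd i (fun z => pd a u z * pd b u z) y
      = pd i (fun z => pd a u z) y * pd b u y + pd a u y * pd i (fun z => pd b u z) y :=
    pd_mul i hpa hpb
  by_cases hab : a = b ∧ a = 0
  · simp only [if_pos hab.1, if_pos hab.2, if_pos hab]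
    have e1 : pd i (fun z => (Ψ (u z)) ^ 2 + pd a u z * pd b u z) y
        = pd i (fun z => (Ψ (u z)) ^ 2) y + pd i (fun z => pd a u z * pd b u z) y :=
      pd_add i (hsq.comp y hud) (hpa.mul hpb)
    have e2 : pd i (fun z => (Ψ (u z)) ^ 2) y = deriv (fun t => (Ψ t) ^ 2) (u y) * pd i u y :=
      pd_comp i hsq hud
    rw [e1, e2, hmul, (((hΨ.differentiable (by simp)) (u y)).hasDerivAt.fun_pow 2).deriv]
    ring
  · by_cases h1 : a = b
    · have h2 : ¬ a = 0 := fun h => hab ⟨h1, h⟩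
      simp only [if_pos h1, if_neg h2, if_neg hab]
      rw [pd_const_add, hmul]
      ring
    · simp only [if_neg h1, if_neg hab]
      rw [pd_const_add, hmul]
      ring

lemma chrInd_contr (hΨ : ContDiff ℝ (⊤ : ℕ∞) Ψ) (hpos : ∀ q, 0 < Ψ q) (hu : ContDiff ℝ (⊤ : ℕ∞) u)
    (a b : Fin (m + 1)) :
    ∑ c, christoffel (graphInd Ψ u) (fun z => (graphInd Ψ u z)⁻¹) y c a b * pd c u y
    = (if b = 0 then Ψ (u y) * deriv Ψ (u y) * (((Ψ (u y)) ^ 2)⁻¹ * pd 0 u y / R2 Ψ u y)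
          * pd a u y else 0)
      + (if a = 0 then Ψ (u y) * deriv Ψ (u y) * (((Ψ (u y)) ^ 2)⁻¹ * pd 0 u y / R2 Ψ u y)
          * pd b u y else 0)
      - (if a = b ∧ a = 0 then Ψ (u y) * deriv Ψ (u y) * ((R2 Ψ u y - 1) / R2 Ψ u y) else 0)
      + ((R2 Ψ u y - 1) / R2 Ψ u y) * pd a (fun z => pd b u z) y := by
  have hR2 : R2 Ψ u y ≠ 0 := (R2_pos Ψ u y hpos).ne'
  have hG : ∀ l : Fin (m + 1),
      pd a (fun z => graphInd Ψ u z b l) y + pd b (fun z => graphInd Ψ u z a l) y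
        - pd l (fun z => graphInd Ψ u z a b) y
      = (if b = l ∧ b = 0 then 2 * Ψ (u y) * deriv Ψ (u y) * pd a u y else 0)
        + (if a = l ∧ a = 0 then 2 * Ψ (u y) * deriv Ψ (u y) * pd b u y else 0)
        - (if a = b ∧ a = 0 then 2 * Ψ (u y) * deriv Ψ (u y) * pd l u y else 0)
        + 2 * pd a (fun z => pd b u z) y * pd l u y := by
    intro l
    rw [pd_graphInd_entry Ψ u y hΨ hu a b l, pd_graphInd_entry Ψ u y hΨ hu b a l,
      pd_graphInd_entry Ψ u y hΨ hu l a b,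
      pd_pd_symm hu l a y, pd_pd_symm hu l b y, pd_pd_symm hu b a y]
    ring
  have hchr : ∀ c : Fin (m + 1),
      christoffel (graphInd Ψ u) (fun z => (graphInd Ψ u z)⁻¹) y c a b
      = (1 / 2) * ∑ l, ginvE Ψ u y c l *
          ((if b = l ∧ b = 0 then 2 * Ψ (u y) * deriv Ψ (u y) * pd a u y else 0)
            + (if a = l ∧ a = 0 then 2 * Ψ (u y) * deriv Ψ (u y) * pd b u y else 0)
            - (if a = b ∧ a = 0 then 2 * Ψ (u y) * deriv Ψ (u y) * pd l u y else 0)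
            + 2 * pd a (fun z => pd b u z) y * pd l u y) := by
    intro c
    rw [christoffel, graphInd_inv Ψ u y hpos]
    congr 1
    exact Finset.sum_congr rfl fun l _ => by rw [hG l]
  have hvc : ∀ l : Fin (m + 1), ∑ c, ginvE Ψ u y c l * pd c u y
      = Dq Ψ u y l * pd l u y / R2 Ψ u y := by
    intro l
    rw [Finset.sum_congr rfl fun c _ => by rw [ginvE_symm Ψ u y c l]]
    exact sum_ginvE_p Ψ u y hpos l
  have hswap : ∑ c, christoffel (graphInd Ψ u) (fun z => (graphInd Ψ u z)⁻¹) y c a b * pd c u y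
      = ∑ l, (1 / 2) *
          ((if b = l ∧ b = 0 then 2 * Ψ (u y) * deriv Ψ (u y) * pd a u y else 0)
            + (if a = l ∧ a = 0 then 2 * Ψ (u y) * deriv Ψ (u y) * pd b u y else 0)
            - (if a = b ∧ a = 0 then 2 * Ψ (u y) * deriv Ψ (u y) * pd l u y else 0)
            + 2 * pd a (fun z => pd b u z) y * pd l u y)
          * (Dq Ψ u y l * pd l u y / R2 Ψ u y) := by
    rw [Finset.sum_congr rfl fun c _ => by
      rw [hchr c, Finset.mul_sum, Finset.sum_mul]]
    rw [Finset.sum_comm]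
    refine Finset.sum_congr rfl fun l _ => ?_
    rw [← hvc l, Finset.mul_sum]
    exact Finset.sum_congr rfl fun c _ => by ring
  rw [hswap]
  have hexp : ∀ l : Fin (m + 1), (1 / 2) *
      ((if b = l ∧ b = 0 then 2 * Ψ (u y) * deriv Ψ (u y) * pd a u y else 0)
        + (if a = l ∧ a = 0 then 2 * Ψ (u y) * deriv Ψ (u y) * pd b u y else 0)
        - (if a = b ∧ a = 0 then 2 * Ψ (u y) * deriv Ψ (u y) * pd l u y else 0)
        + 2 * pd a (fun z => pd b u z) y * pd l u y)
      * (Dq Ψ u y l * pd l u y / R2 Ψ u y)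
      = (if b = l ∧ b = 0 then Ψ (u y) * deriv Ψ (u y) * pd a u y
            * (Dq Ψ u y l * pd l u y / R2 Ψ u y) else 0)
        + (if a = l ∧ a = 0 then Ψ (u y) * deriv Ψ (u y) * pd b u y
            * (Dq Ψ u y l * pd l u y / R2 Ψ u y) else 0)
        - (if a = b ∧ a = 0 then Ψ (u y) * deriv Ψ (u y)
            * (Dq Ψ u y l * (pd l u y) ^ 2 / R2 Ψ u y) else 0)
        + pd a (fun z => pd b u z) y * (Dq Ψ u y l * (pd l u y) ^ 2 / R2 Ψ u y) := by
    intro l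
    split_ifs <;> ring
  rw [Finset.sum_congr rfl fun l _ => hexp l]
  rw [Finset.sum_add_distrib, Finset.sum_sub_distrib, Finset.sum_add_distrib]
  have hA : ∑ l, (if b = l ∧ b = 0 then Ψ (u y) * deriv Ψ (u y) * pd a u y
      * (Dq Ψ u y l * pd l u y / R2 Ψ u y) else 0)
      = (if b = 0 then Ψ (u y) * deriv Ψ (u y) * (((Ψ (u y)) ^ 2)⁻¹ * pd 0 u y / R2 Ψ u y)
          * pd a u y else 0) := by
    by_cases hb0 : b = 0
    · subst hb0
      rw [if_pos rfl]
      have : ∀ l : Fin (m + 1), (if (0 : Fin (m+1)) = l ∧ (0 : Fin (m+1)) = 0 then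
          Ψ (u y) * deriv Ψ (u y) * pd a u y * (Dq Ψ u y l * pd l u y / R2 Ψ u y) else 0)
          = (if (0 : Fin (m+1)) = l then
            Ψ (u y) * deriv Ψ (u y) * pd a u y * (Dq Ψ u y l * pd l u y / R2 Ψ u y) else 0) := by
        intro l
        by_cases h : (0 : Fin (m+1)) = l <;> simp [h]
      rw [Finset.sum_congr rfl fun l _ => this l, Finset.sum_ite_eq Finset.univ 0]
      simp only [Finset.mem_univ, if_true]
      have : Dq Ψ u y 0 = ((Ψ (u y)) ^ 2)⁻¹ := by unfold Dq; rw [if_pos rfl]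
      rw [this]
      ring
    · rw [if_neg hb0]
      refine Finset.sum_eq_zero fun l _ => ?_
      rw [if_neg (fun h => hb0 h.2)]
  have hB : ∑ l, (if a = l ∧ a = 0 then Ψ (u y) * deriv Ψ (u y) * pd b u y
      * (Dq Ψ u y l * pd l u y / R2 Ψ u y) else 0)
      = (if a = 0 then Ψ (u y) * deriv Ψ (u y) * (((Ψ (u y)) ^ 2)⁻¹ * pd 0 u y / R2 Ψ u y)
          * pd b u y else 0) := by
    by_cases ha0 : a = 0
    · subst ha0
      rw [if_pos rfl]
      have : ∀ l : Fin (m + 1), (if (0 : Fin (m+1)) = l ∧ (0 : Fin (m+1)) = 0 then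
          Ψ (u y) * deriv Ψ (u y) * pd b u y * (Dq Ψ u y l * pd l u y / R2 Ψ u y) else 0)
          = (if (0 : Fin (m+1)) = l then
            Ψ (u y) * deriv Ψ (u y) * pd b u y * (Dq Ψ u y l * pd l u y / R2 Ψ u y) else 0) := by
        intro l
        by_cases h : (0 : Fin (m+1)) = l <;> simp [h]
      rw [Finset.sum_congr rfl fun l _ => this l, Finset.sum_ite_eq Finset.univ 0]
      simp only [Finset.mem_univ, if_true]
      have : Dq Ψ u y 0 = ((Ψ (u y)) ^ 2)⁻¹ := by unfold Dq; rw [if_pos rfl]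
      rw [this]
      ring
    · rw [if_neg ha0]
      refine Finset.sum_eq_zero fun l _ => ?_
      rw [if_neg (fun h => ha0 h.2)]
  have hC : ∑ l, (if a = b ∧ a = 0 then Ψ (u y) * deriv Ψ (u y)
      * (Dq Ψ u y l * (pd l u y) ^ 2 / R2 Ψ u y) else 0)
      = (if a = b ∧ a = 0 then Ψ (u y) * deriv Ψ (u y) * ((R2 Ψ u y - 1) / R2 Ψ u y) else 0) := by
    by_cases h3 : a = b ∧ a = 0
    · simp only [if_pos h3]
      rw [Finset.sum_congr rfl fun l (_ : l ∈ Finset.univ) =>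
        show Ψ (u y) * deriv Ψ (u y) * (Dq Ψ u y l * (pd l u y) ^ 2 / R2 Ψ u y)
          = Ψ (u y) * deriv Ψ (u y) / R2 Ψ u y * (Dq Ψ u y l * (pd l u y) ^ 2) from by ring,
        ← Finset.mul_sum, sum_Dq_p_sq]
      ring
    · simp only [if_neg h3]
      exact Finset.sum_eq_zero fun l _ => rfl
  have hD : ∑ l, pd a (fun z => pd b u z) y * (Dq Ψ u y l * (pd l u y) ^ 2 / R2 Ψ u y)
      = ((R2 Ψ u y - 1) / R2 Ψ u y) * pd a (fun z => pd b u z) y := by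
    rw [← Finset.mul_sum]
    rw [show ∑ l : Fin (m+1), Dq Ψ u y l * (pd l u y) ^ 2 / R2 Ψ u y
        = (∑ l : Fin (m+1), Dq Ψ u y l * (pd l u y) ^ 2) / R2 Ψ u y from
      (Finset.sum_div _ _ _).symm, sum_Dq_p_sq]
    ring
  rw [hA, hB, hC, hD]

lemma sum_if_zero_collapse {F : Fin (m + 1) → ℝ} :
    ∑ a : Fin (m + 1), (if a = 0 then F a else 0) = F 0 := by
  rw [Finset.sum_ite_eq' Finset.univ 0 F]
  simp

lemma sum_ginvE_col_p (hpos : ∀ q, 0 < Ψ q) :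
    ∑ a, ginvE Ψ u y a 0 * pd a u y
    = ((Ψ (u y)) ^ 2)⁻¹ * pd 0 u y / R2 Ψ u y := by
  rw [Finset.sum_congr rfl fun a _ => by rw [ginvE_symm Ψ u y a 0]]
  rw [sum_ginvE_p Ψ u y hpos 0]
  have : Dq Ψ u y 0 = ((Ψ (u y)) ^ 2)⁻¹ := by unfold Dq; rw [if_pos rfl]
  rw [this]

lemma Rt_eq (hpos : ∀ q, 0 < Ψ q) :
    ∑ a ∈ Finset.univ.filter (fun a : Fin (m + 1) => a ≠ 0), (pd a u y) ^ 2
    = R2 Ψ u y - 1 - ((Ψ (u y)) ^ 2)⁻¹ * (pd 0 u y) ^ 2 := by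
  have h := sum_Dq_p_sq Ψ u y
  have hsplit : ∑ a : Fin (m + 1), Dq Ψ u y a * (pd a u y) ^ 2
      = ∑ a ∈ Finset.univ.filter (fun a : Fin (m + 1) => a = 0),
          ((Ψ (u y)) ^ 2)⁻¹ * (pd a u y) ^ 2
        + ∑ a ∈ Finset.univ.filter (fun a : Fin (m + 1) => ¬ a = 0), (pd a u y) ^ 2 := by
    rw [← Finset.sum_filter_add_sum_filter_not Finset.univ (fun a : Fin (m + 1) => a = 0)]
    congr 1
    · refine Finset.sum_congr rfl fun a ha => ?_
      rw [Finset.mem_filter] at ha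
      unfold Dq; rw [if_pos ha.2]
    · refine Finset.sum_congr rfl fun a ha => ?_
      rw [Finset.mem_filter] at ha
      unfold Dq; rw [if_neg ha.2, one_mul]
  rw [hsplit] at h
  have h0 : ∑ a ∈ Finset.univ.filter (fun a : Fin (m + 1) => a = 0),
      ((Ψ (u y)) ^ 2)⁻¹ * (pd a u y) ^ 2 = ((Ψ (u y)) ^ 2)⁻¹ * (pd 0 u y) ^ 2 := by
    rw [Finset.filter_eq' Finset.univ 0]
    simp
  rw [h0] at h
  have hfeq : Finset.univ.filter (fun a : Fin (m + 1) => a ≠ 0)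
      = Finset.univ.filter (fun a : Fin (m + 1) => ¬ a = 0) := rfl
  rw [hfeq]
  linarith

end Ind

end Graph

end GraphAux

set_option maxHeartbeats 2000000 in
/-- The mean curvature of the graph `q = u` with respect to `ǧ = e^{2ψ}g'` is
`Ȟ = e^{-ψ}(-ρ Δ'u + ρ⁻¹Ψ⁻¹Ψ' Σᵢ u_{θⁱ}² + (n-1)ρ⁻¹ψ' + ρ⁻¹Ψ⁻¹Ψ')`,
where `Δ'` is the Laplace-Beltrami operator of the induced metric `γ'` from `g'`
(here the surface dimension is `n - 1 = m + 1`). -/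
theorem stmt14 (m : ℕ) (Ψ ψ : ℝ → ℝ) (hΨ : ContDiff ℝ (⊤ : ℕ∞) Ψ) (hψ : ContDiff ℝ (⊤ : ℕ∞) ψ)
    (hpos : ∀ q, 0 < Ψ q)
    (u : (Fin (m + 1) → ℝ) → ℝ) (hu : ContDiff ℝ (⊤ : ℕ∞) u) (y : Fin (m + 1) → ℝ) :
    ∑ a, ∑ b, (Real.exp (2 * ψ (u y)) • graphInd Ψ u y)⁻¹ a b * graphSffC Ψ ψ u y a b
      = Real.exp (-ψ (u y)) *
        (-(graphRho Ψ u y) *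
            (∑ a, ∑ b, (graphInd Ψ u y)⁻¹ a b * graphHess Ψ u y a b)
          + (graphRho Ψ u y)⁻¹ * (Ψ (u y))⁻¹ * deriv Ψ (u y) *
              (∑ a ∈ Finset.univ.filter (fun a : Fin (m + 1) => a ≠ 0), (pd a u y) ^ 2)
          + (m + 1 : ℝ) * (graphRho Ψ u y)⁻¹ * deriv ψ (u y)
          + (graphRho Ψ u y)⁻¹ * (Ψ (u y))⁻¹ * deriv Ψ (u y)) := by
  have hPne : Ψ (u y) ≠ 0 := (hpos (u y)).ne'
  have hr2ne : R2 Ψ u y ≠ 0 := (R2_pos Ψ u y hpos).ne'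
  have hrne : graphRho Ψ u y ≠ 0 := (rho_pos Ψ u y hpos).ne'
  have hrr : graphRho Ψ u y * graphRho Ψ u y = R2 Ψ u y := rho_mul_self Ψ u y hpos
  have hsmulinv : (Real.exp (2 * ψ (u y)) • graphInd Ψ u y)⁻¹
      = Real.exp (-(2 * ψ (u y))) • ginvE Ψ u y := by
    apply Matrix.inv_eq_right_inv
    rw [Matrix.smul_mul, Matrix.mul_smul, graphInd_mul_ginvE Ψ u y hpos, smul_smul,
      ← Real.exp_add]
    norm_num
  -- row sums
  have hrow0 : ∑ b, ginvE Ψ u y 0 b * pd b u y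
      = ((Ψ (u y)) ^ 2)⁻¹ * pd 0 u y / R2 Ψ u y := by
    rw [sum_ginvE_p Ψ u y hpos 0]
    have : Dq Ψ u y 0 = ((Ψ (u y)) ^ 2)⁻¹ := by unfold Dq; rw [if_pos rfl]
    rw [this]
  -- LHS pointwise formula
  have hterm : ∀ a b : Fin (m + 1),
      (Real.exp (2 * ψ (u y)) • graphInd Ψ u y)⁻¹ a b * graphSffC Ψ ψ u y a b
      = (-(Real.exp (ψ (u y)) * Real.exp (-(2 * ψ (u y))) * (graphRho Ψ u y)⁻¹)) *
          (ginvE Ψ u y a b * pd a (fun z => pd b u z) y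
            - deriv ψ (u y) * (ginvE Ψ u y a b * graphInd Ψ u y a b)
            - (if a = 0 ∧ b = 0 then ginvE Ψ u y a b * (Ψ (u y) * deriv Ψ (u y)) else 0)
            - deriv Ψ (u y) / Ψ (u y) *
                ((if a = 0 then ginvE Ψ u y a b * (pd a u y * pd b u y) else 0)
                  + (if b = 0 then ginvE Ψ u y a b * (pd a u y * pd b u y) else 0))) := by
    intro a b
    rw [hsmulinv, Matrix.smul_apply, smul_eq_mul, sffC_explicit Ψ ψ u y hΨ hψ hpos a b]
    by_cases ha : a = 0 <;> by_cases hb : b = 0 <;>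
      simp only [ha, hb, if_true, if_false, and_self, true_and, and_true, false_and, and_false,
        if_pos rfl] <;> ring
  rw [Finset.sum_congr rfl fun a _ => Finset.sum_congr rfl fun b _ => hterm a b]
  rw [Finset.sum_congr rfl fun a (_ : a ∈ Finset.univ) => (Finset.mul_sum _ _ _).symm,
    ← Finset.mul_sum]
  simp only [Finset.sum_sub_distrib]
  -- T2 : the trace term
  have hT2 : ∑ a : Fin (m+1), ∑ b : Fin (m+1),
      deriv ψ (u y) * (ginvE Ψ u y a b * graphInd Ψ u y a b)
      = deriv ψ (u y) * (m + 1 : ℝ) := by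
    rw [Finset.sum_congr rfl fun a (_ : a ∈ Finset.univ) => (Finset.mul_sum _ _ _).symm,
      ← Finset.mul_sum, trace_ginvE_Ind Ψ u y hpos]
  rw [hT2]
  -- T3 : the corner term
  have hT3 : ∑ a : Fin (m+1), ∑ b : Fin (m+1),
      (if a = 0 ∧ b = 0 then ginvE Ψ u y a b * (Ψ (u y) * deriv Ψ (u y)) else 0)
      = ginvE Ψ u y 0 0 * (Ψ (u y) * deriv Ψ (u y)) := by
    have hin : ∀ a : Fin (m+1), ∑ b : Fin (m+1),
        (if a = 0 ∧ b = 0 then ginvE Ψ u y a b * (Ψ (u y) * deriv Ψ (u y)) else 0)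
        = if a = 0 then ginvE Ψ u y a 0 * (Ψ (u y) * deriv Ψ (u y)) else 0 := by
      intro a
      by_cases ha : a = 0
      · simp only [ha, true_and, if_pos rfl]
        exact sum_if_zero_collapse
      · simp only [ha, false_and, if_false, Finset.sum_const_zero]
    rw [Finset.sum_congr rfl fun a _ => hin a]
    exact sum_if_zero_collapse
  rw [hT3]
  -- T4 : the two off-diagonal terms
  have hSa : ∑ a : Fin (m+1), ∑ b : Fin (m+1),
      (if a = 0 then ginvE Ψ u y a b * (pd a u y * pd b u y) else 0)
      = ((Ψ (u y)) ^ 2)⁻¹ * pd 0 u y / R2 Ψ u y * pd 0 u y := by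
    have hin : ∀ a : Fin (m+1), ∑ b : Fin (m+1),
        (if a = 0 then ginvE Ψ u y a b * (pd a u y * pd b u y) else 0)
        = if a = 0 then (∑ b, ginvE Ψ u y a b * pd b u y) * pd a u y else 0 := by
      intro a
      by_cases ha : a = 0
      · subst ha
        simp only [if_pos rfl, if_true, Finset.sum_mul]
        exact Finset.sum_congr rfl fun b _ => by ring
      · simp only [ha, if_false, Finset.sum_const_zero]
    rw [Finset.sum_congr rfl fun a _ => hin a,
      sum_if_zero_collapse (F := fun a => (∑ b, ginvE Ψ u y a b * pd b u y) * pd a u y),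
      hrow0]
  have hSb : ∑ a : Fin (m+1), ∑ b : Fin (m+1),
      (if b = 0 then ginvE Ψ u y a b * (pd a u y * pd b u y) else 0)
      = ((Ψ (u y)) ^ 2)⁻¹ * pd 0 u y / R2 Ψ u y * pd 0 u y := by
    have hin : ∀ a : Fin (m+1), ∑ b : Fin (m+1),
        (if b = 0 then ginvE Ψ u y a b * (pd a u y * pd b u y) else 0)
        = ginvE Ψ u y a 0 * pd a u y * pd 0 u y := by
      intro a
      rw [sum_if_zero_collapse (F := fun b => ginvE Ψ u y a b * (pd a u y * pd b u y))]
      ring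
    rw [Finset.sum_congr rfl fun a _ => hin a, ← Finset.sum_mul,
      sum_ginvE_col_p Ψ u y hpos]
  -- T4 assembled
  have hT4 : ∑ a : Fin (m+1), ∑ b : Fin (m+1),
      deriv Ψ (u y) / Ψ (u y) *
        ((if a = 0 then ginvE Ψ u y a b * (pd a u y * pd b u y) else 0)
          + (if b = 0 then ginvE Ψ u y a b * (pd a u y * pd b u y) else 0))
      = deriv Ψ (u y) / Ψ (u y) *
          (((Ψ (u y)) ^ 2)⁻¹ * pd 0 u y / R2 Ψ u y * pd 0 u y
            + ((Ψ (u y)) ^ 2)⁻¹ * pd 0 u y / R2 Ψ u y * pd 0 u y) := by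
    rw [Finset.sum_congr rfl fun a (_ : a ∈ Finset.univ) => (Finset.mul_sum _ _ _).symm,
      ← Finset.mul_sum]
    congr 1
    rw [Finset.sum_congr rfl fun a (_ : a ∈ Finset.univ) => Finset.sum_add_distrib,
      Finset.sum_add_distrib, hSa, hSb]
  rw [hT4]
  -- the Laplacian
  have hpt : ∀ a b : Fin (m + 1), (graphInd Ψ u y)⁻¹ a b * graphHess Ψ u y a b
      = ginvE Ψ u y a b * pd a (fun z => pd b u z) y
        - (ginvE Ψ u y a b * (if b = 0 then Ψ (u y) * deriv Ψ (u y)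
              * (((Ψ (u y)) ^ 2)⁻¹ * pd 0 u y / R2 Ψ u y) * pd a u y else 0)
          + ginvE Ψ u y a b * (if a = 0 then Ψ (u y) * deriv Ψ (u y)
              * (((Ψ (u y)) ^ 2)⁻¹ * pd 0 u y / R2 Ψ u y) * pd b u y else 0)
          - ginvE Ψ u y a b * (if a = b ∧ a = 0 then Ψ (u y) * deriv Ψ (u y)
              * ((R2 Ψ u y - 1) / R2 Ψ u y) else 0)
          + (R2 Ψ u y - 1) / R2 Ψ u y
              * (ginvE Ψ u y a b * pd a (fun z => pd b u z) y)) := by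
    intro a b
    rw [graphHess, graphInd_inv Ψ u y hpos, chrInd_contr Ψ u y hΨ hpos hu a b]
    ring
  have hL1 : ∑ a : Fin (m+1), ∑ b : Fin (m+1), ginvE Ψ u y a b *
      (if b = 0 then Ψ (u y) * deriv Ψ (u y)
        * (((Ψ (u y)) ^ 2)⁻¹ * pd 0 u y / R2 Ψ u y) * pd a u y else 0)
      = Ψ (u y) * deriv Ψ (u y) * (((Ψ (u y)) ^ 2)⁻¹ * pd 0 u y / R2 Ψ u y)
        * (((Ψ (u y)) ^ 2)⁻¹ * pd 0 u y / R2 Ψ u y) := by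
    have hin : ∀ a : Fin (m+1), ∑ b : Fin (m+1), ginvE Ψ u y a b *
        (if b = 0 then Ψ (u y) * deriv Ψ (u y)
          * (((Ψ (u y)) ^ 2)⁻¹ * pd 0 u y / R2 Ψ u y) * pd a u y else 0)
        = Ψ (u y) * deriv Ψ (u y) * (((Ψ (u y)) ^ 2)⁻¹ * pd 0 u y / R2 Ψ u y)
            * (ginvE Ψ u y a 0 * pd a u y) := by
      intro a
      rw [Finset.sum_congr rfl fun b (_ : b ∈ Finset.univ) => show ginvE Ψ u y a b *
          (if b = 0 then Ψ (u y) * deriv Ψ (u y)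
            * (((Ψ (u y)) ^ 2)⁻¹ * pd 0 u y / R2 Ψ u y) * pd a u y else 0)
          = (if b = 0 then Ψ (u y) * deriv Ψ (u y)
              * (((Ψ (u y)) ^ 2)⁻¹ * pd 0 u y / R2 Ψ u y) * (ginvE Ψ u y a b * pd a u y)
            else 0) from by split_ifs <;> ring]
      rw [sum_if_zero_collapse]
    rw [Finset.sum_congr rfl fun a _ => hin a, ← Finset.mul_sum,
      Finset.sum_congr rfl fun a (_ : a ∈ Finset.univ) =>
        show ginvE Ψ u y a 0 * pd a u y = ginvE Ψ u y a 0 * pd a u y from rfl,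
      sum_ginvE_col_p Ψ u y hpos]
  have hL2 : ∑ a : Fin (m+1), ∑ b : Fin (m+1), ginvE Ψ u y a b *
      (if a = 0 then Ψ (u y) * deriv Ψ (u y)
        * (((Ψ (u y)) ^ 2)⁻¹ * pd 0 u y / R2 Ψ u y) * pd b u y else 0)
      = Ψ (u y) * deriv Ψ (u y) * (((Ψ (u y)) ^ 2)⁻¹ * pd 0 u y / R2 Ψ u y)
        * (((Ψ (u y)) ^ 2)⁻¹ * pd 0 u y / R2 Ψ u y) := by
    have hin : ∀ a : Fin (m+1), ∑ b : Fin (m+1), ginvE Ψ u y a b *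
        (if a = 0 then Ψ (u y) * deriv Ψ (u y)
          * (((Ψ (u y)) ^ 2)⁻¹ * pd 0 u y / R2 Ψ u y) * pd b u y else 0)
        = if a = 0 then Ψ (u y) * deriv Ψ (u y) * (((Ψ (u y)) ^ 2)⁻¹ * pd 0 u y / R2 Ψ u y)
            * (∑ b, ginvE Ψ u y a b * pd b u y) else 0 := by
      intro a
      by_cases ha : a = 0
      · simp only [ha, if_pos rfl, if_true, Finset.mul_sum]
        exact Finset.sum_congr rfl fun b _ => by ring
      · simp only [ha, if_false, mul_zero, Finset.sum_const_zero]
    rw [Finset.sum_congr rfl fun a _ => hin a, sum_if_zero_collapse, hrow0]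
  have hL3 : ∑ a : Fin (m+1), ∑ b : Fin (m+1), ginvE Ψ u y a b *
      (if a = b ∧ a = 0 then Ψ (u y) * deriv Ψ (u y) * ((R2 Ψ u y - 1) / R2 Ψ u y) else 0)
      = ginvE Ψ u y 0 0 * (Ψ (u y) * deriv Ψ (u y) * ((R2 Ψ u y - 1) / R2 Ψ u y)) := by
    have hin : ∀ a : Fin (m+1), ∑ b : Fin (m+1), ginvE Ψ u y a b *
        (if a = b ∧ a = 0 then Ψ (u y) * deriv Ψ (u y) * ((R2 Ψ u y - 1) / R2 Ψ u y) else 0)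
        = if a = 0 then ginvE Ψ u y a a
            * (Ψ (u y) * deriv Ψ (u y) * ((R2 Ψ u y - 1) / R2 Ψ u y)) else 0 := by
      intro a
      by_cases ha : a = 0
      · rw [if_pos ha]
        rw [Finset.sum_congr rfl fun b (_ : b ∈ Finset.univ) => show ginvE Ψ u y a b *
            (if a = b ∧ a = 0 then Ψ (u y) * deriv Ψ (u y) * ((R2 Ψ u y - 1) / R2 Ψ u y) else 0)
            = (if a = b then ginvE Ψ u y a b
                * (Ψ (u y) * deriv Ψ (u y) * ((R2 Ψ u y - 1) / R2 Ψ u y)) else 0) from by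
          by_cases hab : a = b
          · rw [if_pos ⟨hab, ha⟩, if_pos hab]
          · rw [if_neg (fun h => hab h.1), if_neg hab, mul_zero]]
        rw [Finset.sum_ite_eq Finset.univ a]
        simp
      · rw [if_neg ha]
        refine Finset.sum_eq_zero fun b _ => ?_
        rw [if_neg (fun h => ha h.2), mul_zero]
    rw [Finset.sum_congr rfl fun a _ => hin a, sum_if_zero_collapse]
  have hL4 : ∑ a : Fin (m+1), ∑ b : Fin (m+1), (R2 Ψ u y - 1) / R2 Ψ u y
      * (ginvE Ψ u y a b * pd a (fun z => pd b u z) y)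
      = (R2 Ψ u y - 1) / R2 Ψ u y
        * ∑ a : Fin (m+1), ∑ b : Fin (m+1), ginvE Ψ u y a b * pd a (fun z => pd b u z) y := by
    rw [Finset.sum_congr rfl fun a (_ : a ∈ Finset.univ) => (Finset.mul_sum _ _ _).symm,
      ← Finset.mul_sum]
  have hlap : ∑ a : Fin (m+1), ∑ b : Fin (m+1),
      (graphInd Ψ u y)⁻¹ a b * graphHess Ψ u y a b
      = (∑ a : Fin (m+1), ∑ b : Fin (m+1), ginvE Ψ u y a b * pd a (fun z => pd b u z) y)
        - (Ψ (u y) * deriv Ψ (u y) * (((Ψ (u y)) ^ 2)⁻¹ * pd 0 u y / R2 Ψ u y)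
              * (((Ψ (u y)) ^ 2)⁻¹ * pd 0 u y / R2 Ψ u y)
          + Ψ (u y) * deriv Ψ (u y) * (((Ψ (u y)) ^ 2)⁻¹ * pd 0 u y / R2 Ψ u y)
              * (((Ψ (u y)) ^ 2)⁻¹ * pd 0 u y / R2 Ψ u y)
          - ginvE Ψ u y 0 0 * (Ψ (u y) * deriv Ψ (u y) * ((R2 Ψ u y - 1) / R2 Ψ u y))
          + (R2 Ψ u y - 1) / R2 Ψ u y
            * ∑ a : Fin (m+1), ∑ b : Fin (m+1),
                ginvE Ψ u y a b * pd a (fun z => pd b u z) y) := by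
    rw [Finset.sum_congr rfl fun a _ => Finset.sum_congr rfl fun b _ => hpt a b]
    simp only [Finset.sum_sub_distrib, Finset.sum_add_distrib]
    rw [hL1, hL2, hL3, hL4]
  rw [hlap, Rt_eq Ψ u y hpos]
  -- expand the corner entry of the inverse metric
  have hg00 : ginvE Ψ u y 0 0 = ((Ψ (u y)) ^ 2)⁻¹
      - ((Ψ (u y)) ^ 2)⁻¹ * pd 0 u y * ((Ψ (u y)) ^ 2)⁻¹ * pd 0 u y / R2 Ψ u y := by
    rw [ginvE_apply, if_pos rfl]
    have : Dq Ψ u y 0 = ((Ψ (u y)) ^ 2)⁻¹ := by unfold Dq; rw [if_pos rfl]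
    rw [this]
  rw [hg00]
  -- combine exponentials
  have hexp : Real.exp (ψ (u y)) * Real.exp (-(2 * ψ (u y))) = Real.exp (-ψ (u y)) := by
    rw [← Real.exp_add]; congr 1; ring
  rw [hexp]
  -- final scalar identity
  rw [show R2 Ψ u y = graphRho Ψ u y * graphRho Ψ u y from hrr.symm]
  generalize (∑ a : Fin (m+1), ∑ b : Fin (m+1),
    ginvE Ψ u y a b * pd a (fun z => pd b u z) y) = SH
  field_simp
  ring
end AuxToolkit
end
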